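/- Let M be a finite matroid with rank function r, and let X be a cyclic flat of M that is neither the least nor the greatest cyclic flat of M, and such that every cyclic flat of M other than X, the least cyclic flat, and the greatest cyclic flat is incomparable with X under inclusion. Then there exists a matroid M' on E(M) whose collection of cyclic flats is exactly the collection of cyclic flats of M with X removed, and whose rank function agrees with r on every cyclic flat of M other than X. -/

import Mathlib

namespace Matroid

variable {α β : Type*}

/-- A circuit of a matroid: a minimal dependent set. -/
def IsCircuit' (M : Matroid α) (C : Set α) : Prop :=
  M.Dep C ∧ ∀ D, D ⊂ C → M.Indep D

/-- A cyclic flat: a flat that is a (possibly empty) union of circuits. -/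
def CyclicFlat (M : Matroid α) (X : Set α) : Prop :=
  M.IsFlat X ∧ ∀ e ∈ X, ∃ C, M.IsCircuit' C ∧ C ⊆ X ∧ e ∈ C

/-- The rank of a set: the maximum size of an independent subset. -/
noncomputable def rk (M : Matroid α) (X : Set α) : ℕ :=
  sSup {n | ∃ I, M.Indep I ∧ I ⊆ X ∧ I.ncard = n}

/-- Deletion of a set from a matroid. -/
def del (M : Matroid α) (D : Set α) : Matroid α := M ↾ (M.E \ D)

/-- Contraction of a set in a matroid. -/
def con (M : Matroid α) (C : Set α) : Matroid α := (M✶ ↾ (M.E \ C))✶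

/-- `N` is a minor of `M` if it is obtained from `M` by a contraction and a deletion. -/
def IsMinorOf (N M : Matroid α) : Prop := ∃ C D, N = (M.con C).del D

/-- Matroid isomorphism: a bijection of ground sets preserving independence. -/
def IsIsoTo (M : Matroid α) (N : Matroid β) : Prop :=
  ∃ e : M.E ≃ N.E, ∀ I : Set M.E,
    M.Indep (Subtype.val '' I) ↔ N.Indep (Subtype.val '' (e '' I))

end Matroid

/-!
Removing `X` from the lattice of cyclic flats leaves a sublattice: by the incomparability
hypothesis, the join `cl (F ∪ G)` of two cyclic flats other than `X` can only be `X` if both lie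
below `X`, hence equal `cl ∅`, and dually the meet `cyclicPart (F ∩ G)` can only be `X` if both
equal the union of all circuits. For any sublattice `𝒵` of cyclic flats containing `cl ∅`, the
function `S ↦ min_{G ∈ 𝒵} (r G + |S \ G|)` is a matroid rank function: submodularity follows by
comparing minimisers `F` and `G` for `S` and `T` with their join and meet, using the
submodularity of `r` and `r (cyclicPart A) + |A \ cyclicPart A| ≤ r A`. The matroid it defines
has exactly the members of `𝒵` as cyclic flats, with their ranks in `M`.
-/

namespace Set

lemma ncard_union_sdiff_add_ncard_inter_sdiff_le {α : Type*} {S T F G : Set α} (hS : S.Finite)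
    (hT : T.Finite) :
    ((S ∪ T) \ (F ∪ G)).ncard + ((S ∩ T) \ (F ∩ G)).ncard ≤ (S \ F).ncard + (T \ G).ncard := by
  have hSF : (S \ F).Finite := hS.sdiff
  have hTG : (T \ G).Finite := hT.sdiff
  calc _ = ((S ∪ T) \ (F ∪ G) ∪ (S ∩ T) \ (F ∩ G)).ncard
        + ((S ∪ T) \ (F ∪ G) ∩ ((S ∩ T) \ (F ∩ G))).ncard :=
        (ncard_union_add_ncard_inter _ _ (hS.union hT).sdiff (hS.inter_of_left T).sdiff).symm
    _ ≤ (S \ F ∪ T \ G).ncard + (S \ F ∩ (T \ G)).ncard := by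
        refine add_le_add (ncard_le_ncard (fun x => ?_) (hSF.union hTG))
          (ncard_le_ncard (fun x => ?_) (hSF.inter_of_left _)) <;>
        · simp only [mem_union, mem_sdiff, mem_inter_iff]
          tauto
    _ = _ := ncard_union_add_ncard_inter _ _ hSF hTG

end Set

namespace Matroid

open Set

variable {α : Type*}

section Rank

variable {M : Matroid α} [M.Finite] {X Y I : Set α} {e : α}

lemma cast_rk_eq_eRk (M : Matroid α) [M.Finite] (X : Set α) : (M.rk X : ℕ∞) = M.eRk X := by
  obtain ⟨I, hI⟩ := M.exists_isBasis' X
  have hIfin : I.Finite := M.ground_finite.subset hI.indep.subset_ground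
  have hmax : IsGreatest {n | ∃ J, M.Indep J ∧ J ⊆ X ∧ J.ncard = n} I.ncard := by
    refine ⟨⟨I, hI.indep, hI.subset, rfl⟩, ?_⟩
    rintro _ ⟨J, hJ, hJX, rfl⟩
    have hJfin : J.Finite := M.ground_finite.subset hJ.subset_ground
    have h := hJ.encard_le_eRk_of_subset hJX
    rwa [hI.eRk_eq_encard, ← hJfin.cast_ncard_eq, ← hIfin.cast_ncard_eq, Nat.cast_le] at h
  rw [rk, hmax.csSup_eq, hIfin.cast_ncard_eq, hI.eRk_eq_encard]

lemma rk_mono (hXY : X ⊆ Y) : M.rk X ≤ M.rk Y := by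
  have h := M.eRk_mono hXY
  rwa [← cast_rk_eq_eRk, ← cast_rk_eq_eRk, Nat.cast_le] at h

lemma rk_closure (X : Set α) : M.rk (M.closure X) = M.rk X := by
  exact_mod_cast (M.cast_rk_eq_eRk _).trans
    ((M.eRk_closure_eq X).trans (M.cast_rk_eq_eRk X).symm)

lemma rk_union_le_rk_add_ncard (X : Set α) (hY : Y.Finite) :
    M.rk (X ∪ Y) ≤ M.rk X + Y.ncard := by
  have h := M.eRk_union_le_eRk_add_encard X Y
  rwa [← cast_rk_eq_eRk, ← cast_rk_eq_eRk, ← hY.cast_ncard_eq, ← Nat.cast_add,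
    Nat.cast_le] at h

lemma rk_union_add_rk_inter_le (X Y : Set α) :
    M.rk (X ∪ Y) + M.rk (X ∩ Y) ≤ M.rk X + M.rk Y := by
  have h := M.eRk_inter_add_eRk_union_le X Y
  rw [← cast_rk_eq_eRk, ← cast_rk_eq_eRk, ← cast_rk_eq_eRk, ← cast_rk_eq_eRk] at h
  exact_mod_cast (add_comm _ _).trans_le h

lemma Indep.rk_eq_ncard (hI : M.Indep I) : M.rk I = I.ncard := by
  have h := hI.eRk_eq_encard
  rwa [← cast_rk_eq_eRk, ← (M.ground_finite.subset hI.subset_ground).cast_ncard_eq,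
    Nat.cast_inj] at h

lemma IsBasis.rk_eq_ncard (hI : M.IsBasis I X) : M.rk X = I.ncard := by
  rw [← hI.indep.rk_eq_ncard, ← rk_closure X, ← hI.closure_eq_closure, rk_closure]

lemma mem_closure_iff_rk_insert_eq (he : e ∈ M.E) :
    e ∈ M.closure X ↔ M.rk (insert e X) = M.rk X := by
  rw [← Nat.cast_inj (R := ℕ∞), cast_rk_eq_eRk, cast_rk_eq_eRk]
  refine ⟨fun h => ?_, fun h => by_contra fun hX => ?_⟩
  · rw [← eRk_insert_closure_eq, insert_eq_of_mem h, eRk_closure_eq]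
  · rw [eRk_insert_eq_add_one ⟨he, hX⟩, ← cast_rk_eq_eRk] at h
    norm_cast at h
    omega

end Rank

section RankFunction

variable {E I J S K : Set α} {r : Set α → ℕ} {e : α}

structure IsRankFunction (E : Set α) (r : Set α → ℕ) : Prop where
  empty : r ∅ = 0
  insert_le : ∀ S ⊆ E, ∀ e ∈ E, r (insert e S) ≤ r S + 1
  mono : ∀ ⦃S T⦄, S ⊆ T → T ⊆ E → r S ≤ r T
  union_add_inter_le : ∀ S ⊆ E, ∀ T ⊆ E, r (S ∪ T) + r (S ∩ T) ≤ r S + r T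

namespace IsRankFunction

lemma union_le_add_ncard (hr : IsRankFunction E r) (hS : S ⊆ E) (hK : K ⊆ E)
    (hKfin : K.Finite) : r (S ∪ K) ≤ r S + K.ncard := by
  refine hKfin.induction_on_subset (motive := fun t _ => r (S ∪ t) ≤ r S + t.ncard) _
    (by simp) fun {a t} haK hts hat ih => ?_
  rw [union_insert, ncard_insert_of_notMem hat (hKfin.subset hts)]
  have := hr.insert_le (S ∪ t) (union_subset hS (hts.trans hK)) a (hK haK)
  omega

lemma le_ncard (hr : IsRankFunction E r) (hS : S ⊆ E) (hSfin : S.Finite) : r S ≤ S.ncard := by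
  simpa [hr.empty] using hr.union_le_add_ncard (empty_subset E) hS hSfin

lemma eq_ncard_of_subset (hr : IsRankFunction E r) (hJE : J ⊆ E) (hJfin : J.Finite)
    (hJ : r J = J.ncard) (hIJ : I ⊆ J) : r I = I.ncard := by
  have hle := hr.union_le_add_ncard (K := J \ I) (hIJ.trans hJE) (sdiff_subset.trans hJE)
    hJfin.sdiff
  rw [union_sdiff_cancel hIJ] at hle
  have hcard := ncard_sdiff_add_ncard_of_subset hIJ hJfin
  have := hr.le_ncard (hIJ.trans hJE) (hJfin.subset hIJ)
  omega

lemma insert_eq_of_ne_ncard (hr : IsRankFunction E r) (hIE : I ⊆ E) (hIfin : I.Finite)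
    (hI : r I = I.ncard) (heE : e ∈ E) (heI : e ∉ I)
    (he : r (insert e I) ≠ (insert e I).ncard) : r (insert e I) = r I := by
  rw [ncard_insert_of_notMem heI hIfin] at he
  have := hr.insert_le I hIE e heE
  have := hr.mono (subset_insert e I) (insert_subset heE hIE)
  omega

lemma union_eq_of_forall_insert_eq (hr : IsRankFunction E r) (hS : S ⊆ E) (hK : K ⊆ E)
    (hKfin : K.Finite) (h : ∀ e ∈ K, r (insert e S) = r S) : r (S ∪ K) = r S := by
  refine hKfin.induction_on_subset (motive := fun t _ => r (S ∪ t) = r S) _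
    (by simp) fun {a t} haK hts hat ih => ?_
  have htE := hts.trans hK
  have hsub := hr.union_add_inter_le (S ∪ t) (union_subset hS htE) (insert a S)
    (insert_subset (hK haK) hS)
  have hinter := hr.mono (subset_inter subset_union_left (subset_insert a S))
    (inter_subset_left.trans (union_subset hS htE))
  have hmono := hr.mono (subset_union_left (t := insert a t))
    (union_subset hS (insert_subset (hK haK) htE))
  rw [show S ∪ t ∪ insert a S = S ∪ insert a t by
    ext; simp only [mem_union, mem_insert_iff]; tauto, ih, h a haK] at hsub
  omega

lemma exists_insert_of_ncard_lt (hr : IsRankFunction E r) (hE : E.Finite)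
    (hI : I ⊆ E ∧ r I = I.ncard) (hJ : J ⊆ E ∧ r J = J.ncard) (hlt : I.ncard < J.ncard) :
    ∃ e ∈ J, e ∉ I ∧ insert e I ⊆ E ∧ r (insert e I) = (insert e I).ncard := by
  by_contra! hcon
  have hrk := hr.union_eq_of_forall_insert_eq hI.1 (sdiff_subset.trans hJ.1)
    (hE.subset hJ.1).sdiff fun e he => hr.insert_eq_of_ne_ncard hI.1 (hE.subset hI.1) hI.2
      (hJ.1 he.1) he.2 (hcon e he.1 he.2 (insert_subset (hJ.1 he.1) hI.1))
  have := hr.mono (subset_union_right (s := I)) (union_subset hI.1 hJ.1)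
  rw [union_sdiff_self] at hrk
  omega

theorem exists_matroid (hE : E.Finite) (hr : IsRankFunction E r) :
    ∃ M : Matroid α, M.E = E ∧ ∀ S ⊆ E, M.rk S = r S := by
  set M := (IndepMatroid.ofFinite hE (fun I => I ⊆ E ∧ r I = I.ncard)
    ⟨empty_subset E, by simp [hr.empty]⟩
    (fun I J hJ hIJ => ⟨hIJ.trans hJ.1, hr.eq_ncard_of_subset hJ.1 (hE.subset hJ.1) hJ.2 hIJ⟩)
    (fun I J hI hJ hlt => hr.exists_insert_of_ncard_lt hE hI hJ hlt)
    (fun I hI => hI.1)).matroid with hM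
  refine ⟨M, rfl, fun S hS => ?_⟩
  obtain ⟨B, hB⟩ := M.exists_isBasis S hS
  obtain ⟨hBE, hBr⟩ : B ⊆ E ∧ r B = B.ncard := by simpa [hM] using hB.indep
  have hBfin := hE.subset hBE
  rw [hB.rk_eq_ncard, ← hBr, ← union_sdiff_cancel hB.subset]
  refine (hr.union_eq_of_forall_insert_eq hBE (sdiff_subset.trans hS) (hE.subset hS).sdiff
    fun e he => hr.insert_eq_of_ne_ncard hBE hBfin hBr (hS he.1) he.2 fun h => ?_).symm
  exact (hB.insert_dep he).not_indep (by simpa [hM] using ⟨insert_subset (hS he.1) hBE, h⟩)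

end IsRankFunction

end RankFunction

section CyclicFlat

variable {M : Matroid α} {A B C F G : Set α} {e : α}

lemma isCircuit'_iff : M.IsCircuit' C ↔ M.IsCircuit C := by
  rw [isCircuit_iff_forall_ssubset]
  rfl

/-- The largest cyclic subset of `A`. -/
def cyclicPart (M : Matroid α) (A : Set α) : Set α := ⋃₀ {C | M.IsCircuit C ∧ C ⊆ A}

lemma mem_cyclicPart_iff : e ∈ M.cyclicPart A ↔ ∃ C, M.IsCircuit C ∧ C ⊆ A ∧ e ∈ C := by
  simp [cyclicPart, and_assoc]

lemma cyclicPart_subset (M : Matroid α) (A : Set α) : M.cyclicPart A ⊆ A :=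
  sUnion_subset fun _ hC => hC.2

lemma cyclicPart_subset_ground (M : Matroid α) (A : Set α) : M.cyclicPart A ⊆ M.E :=
  sUnion_subset fun _ hC => hC.1.subset_ground

lemma cyclicPart_mono (hAB : A ⊆ B) : M.cyclicPart A ⊆ M.cyclicPart B :=
  sUnion_mono fun _ hC => ⟨hC.1, hC.2.trans hAB⟩

lemma cyclicPart_cyclicPart (M : Matroid α) (A : Set α) :
    M.cyclicPart (M.cyclicPart A) = M.cyclicPart A := by
  refine (M.cyclicPart_subset _).antisymm fun e he => ?_
  obtain ⟨C, hC, hCA, heC⟩ := mem_cyclicPart_iff.1 he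
  exact mem_cyclicPart_iff.2 ⟨C, hC, fun x hx => mem_cyclicPart_iff.2 ⟨C, hC, hCA, hx⟩, heC⟩

lemma sUnion_isCircuit'_eq (M : Matroid α) :
    ⋃₀ {C | M.IsCircuit' C} = M.cyclicPart M.E := by
  simp_rw [isCircuit'_iff]
  exact congr_arg sUnion (ext fun C => ⟨fun hC => ⟨hC, hC.subset_ground⟩, fun hC => hC.1⟩)

lemma mem_cyclicPart_iff_mem_closure (he : e ∈ A) :
    e ∈ M.cyclicPart A ↔ e ∈ M.closure (A \ {e}) := by
  rw [mem_closure_iff_exists_isCircuit (fun h => h.2 rfl), insert_sdiff_singleton,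
    insert_eq_of_mem he, mem_cyclicPart_iff]
  exact ⟨fun ⟨C, hC, hCA, heC⟩ => ⟨C, hCA, hC, heC⟩, fun ⟨C, hCA, hC, heC⟩ => ⟨C, hC, hCA, heC⟩⟩

lemma cyclicFlat_iff : M.CyclicFlat F ↔ M.IsFlat F ∧ F ⊆ M.cyclicPart F := by
  simp_rw [CyclicFlat, isCircuit'_iff, subset_def (s := F), mem_cyclicPart_iff]

lemma cyclicFlat_closure (hA : A ⊆ M.cyclicPart A) : M.CyclicFlat (M.closure A) := by
  have hAcl := M.subset_closure A (hA.trans (M.cyclicPart_subset_ground A))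
  refine cyclicFlat_iff.2 ⟨M.isFlat_closure A, fun e he => ?_⟩
  by_cases heA : e ∈ A
  · exact cyclicPart_mono hAcl (hA heA)
  obtain ⟨C, hCA, hC, heC⟩ := exists_isCircuit_of_mem_closure he heA
  exact mem_cyclicPart_iff.2 ⟨C, hC, hCA.trans (insert_subset he hAcl), heC⟩

lemma cyclicFlat_closure_empty (M : Matroid α) : M.CyclicFlat (M.closure ∅) :=
  cyclicFlat_closure (empty_subset _)

lemma CyclicFlat.closure_union (hF : M.CyclicFlat F) (hG : M.CyclicFlat G) :
    M.CyclicFlat (M.closure (F ∪ G)) :=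
  cyclicFlat_closure (union_subset
    ((cyclicFlat_iff.1 hF).2.trans (cyclicPart_mono subset_union_left))
    ((cyclicFlat_iff.1 hG).2.trans (cyclicPart_mono subset_union_right)))

lemma IsFlat.inter (hF : M.IsFlat F) (hG : M.IsFlat G) : M.IsFlat (F ∩ G) := by
  rw [inter_eq_iInter]
  exact IsFlat.iInter fun b => by cases b <;> assumption

lemma IsFlat.cyclicFlat_cyclicPart (hF : M.IsFlat F) : M.CyclicFlat (M.cyclicPart F) := by
  have hcl := cyclicFlat_closure (M.cyclicPart_cyclicPart F).symm.subset
  have hclF : M.closure (M.cyclicPart F) ⊆ F := by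
    simpa [hF.closure] using M.closure_subset_closure (M.cyclicPart_subset F)
  have hsub : M.closure (M.cyclicPart F) ⊆ M.cyclicPart F :=
    (cyclicFlat_iff.1 hcl).2.trans (cyclicPart_mono hclF)
  rwa [hsub.antisymm (M.subset_closure _ (M.cyclicPart_subset_ground F))] at hcl

lemma CyclicFlat.subset_cyclicPart_ground (hF : M.CyclicFlat F) : F ⊆ M.cyclicPart M.E :=
  (cyclicFlat_iff.1 hF).2.trans (cyclicPart_mono (cyclicFlat_iff.1 hF).1.subset_ground)

lemma rk_cyclicPart_add_ncard_le [M.Finite] (hA : A ⊆ M.E) :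
    M.rk (M.cyclicPart A) + (A \ M.cyclicPart A).ncard ≤ M.rk A := by
  obtain ⟨B, hB⟩ := M.exists_isBasis _ (M.cyclicPart_subset_ground A)
  have hBA := hB.subset.trans (M.cyclicPart_subset A)
  have hdisj : Disjoint B (A \ M.cyclicPart A) :=
    disjoint_left.2 fun x hxB hx => hx.2 (hB.subset hxB)
  have hindep : M.Indep (B ∪ (A \ M.cyclicPart A)) := by
    refine (indep_iff_forall_subset_not_isCircuit (union_subset (hBA.trans hA)
      (sdiff_subset.trans hA))).2 fun C hCI hC => hC.not_indep (hB.indep.subset fun x hxC => ?_)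
    have hCA : C ⊆ A := hCI.trans (union_subset hBA sdiff_subset)
    exact (hCI hxC).resolve_right fun hx => hx.2 (mem_cyclicPart_iff.2 ⟨C, hC, hCA, hxC⟩)
  have hfin := M.ground_finite.subset hA
  rw [hB.rk_eq_ncard, ← ncard_union_eq hdisj (hfin.subset hBA) hfin.sdiff,
    ← hindep.rk_eq_ncard]
  exact rk_mono (union_subset hBA sdiff_subset)

lemma isFlat_iff_rk [M.Finite] :
    M.IsFlat F ↔ F ⊆ M.E ∧ ∀ e ∈ M.E \ F, M.rk F < M.rk (insert e F) := by
  refine ⟨fun hF => ⟨hF.subset_ground, fun e he => ?_⟩, fun ⟨hFE, h⟩ => ?_⟩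
  · refine (rk_mono (subset_insert e F)).lt_of_ne fun heq => he.2 ?_
    rw [← hF.closure, mem_closure_iff_rk_insert_eq he.1, heq]
  refine isFlat_iff_closure_eq.2 (subset_antisymm (fun e he => by_contra fun heF => ?_)
    (M.subset_closure F hFE))
  have heE := M.closure_subset_ground F he
  exact (h e ⟨heE, heF⟩).ne ((mem_closure_iff_rk_insert_eq heE).1 he).symm

lemma cyclicFlat_iff_rk [M.Finite] : M.CyclicFlat F ↔ F ⊆ M.E ∧
    (∀ e ∈ M.E \ F, M.rk F < M.rk (insert e F)) ∧ ∀ e ∈ F, M.rk (F \ {e}) = M.rk F := by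
  rw [cyclicFlat_iff, isFlat_iff_rk, and_assoc]
  refine and_congr_right fun hFE => and_congr_right fun _ => forall₂_congr fun e he => ?_
  rw [mem_cyclicPart_iff_mem_closure he, mem_closure_iff_rk_insert_eq (hFE he),
    insert_sdiff_singleton, insert_eq_of_mem he, eq_comm]

end CyclicFlat

section Sublattice

variable {M : Matroid α} {𝒵 : Set (Set α)} {S T F G Y : Set α} {e : α}

/-- `M.closure (F ∪ G)` and `M.cyclicPart (F ∩ G)` are the join and the meet of `F` and `G` in
the lattice of cyclic flats of `M`. -/
structure IsCyclicFlatSublattice (M : Matroid α) (𝒵 : Set (Set α)) : Prop where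
  cyclicFlat : ∀ F ∈ 𝒵, M.CyclicFlat F
  closure_empty_mem : M.closure ∅ ∈ 𝒵
  closure_union_mem : ∀ F ∈ 𝒵, ∀ G ∈ 𝒵, M.closure (F ∪ G) ∈ 𝒵
  cyclicPart_inter_mem : ∀ F ∈ 𝒵, ∀ G ∈ 𝒵, M.cyclicPart (F ∩ G) ∈ 𝒵

noncomputable def cyclicFlatsRk (M : Matroid α) (𝒵 : Set (Set α)) (S : Set α) : ℕ :=
  sInf ((fun G => M.rk G + (S \ G).ncard) '' 𝒵)

lemma cyclicFlatsRk_le (hG : G ∈ 𝒵) : M.cyclicFlatsRk 𝒵 S ≤ M.rk G + (S \ G).ncard :=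
  Nat.sInf_le (mem_image_of_mem _ hG)

lemma exists_cyclicFlatsRk_eq (h𝒵 : 𝒵.Nonempty) (S : Set α) :
    ∃ G ∈ 𝒵, M.cyclicFlatsRk 𝒵 S = M.rk G + (S \ G).ncard :=
  let ⟨G, hG, hGS⟩ := Nat.sInf_mem (h𝒵.image fun G => M.rk G + (S \ G).ncard)
  ⟨G, hG, hGS.symm⟩

lemma IsCyclicFlatSublattice.nonempty (h : M.IsCyclicFlatSublattice 𝒵) : 𝒵.Nonempty :=
  ⟨_, h.closure_empty_mem⟩

lemma IsCyclicFlatSublattice.subset_ground (h : M.IsCyclicFlatSublattice 𝒵) (hG : G ∈ 𝒵) :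
    G ⊆ M.E :=
  (h.cyclicFlat G hG).1.subset_ground

variable [M.Finite]

lemma rk_le_cyclicFlatsRk (h𝒵 : 𝒵.Nonempty) (hS : S ⊆ M.E) :
    M.rk S ≤ M.cyclicFlatsRk 𝒵 S := by
  obtain ⟨G, -, hG⟩ := exists_cyclicFlatsRk_eq (M := M) h𝒵 S
  rw [hG]
  calc M.rk S ≤ M.rk (G ∪ (S \ G)) :=
        rk_mono (union_sdiff_self (s := G) (t := S) ▸ subset_union_right)
    _ ≤ M.rk G + (S \ G).ncard := rk_union_le_rk_add_ncard G (M.ground_finite.subset hS).sdiff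

lemma cyclicFlatsRk_eq_rk (hG𝒵 : G ∈ 𝒵) (hGE : G ⊆ M.E) : M.cyclicFlatsRk 𝒵 G = M.rk G :=
  le_antisymm (by simpa using cyclicFlatsRk_le (M := M) (S := G) hG𝒵)
    (rk_le_cyclicFlatsRk ⟨G, hG𝒵⟩ hGE)

namespace IsCyclicFlatSublattice

variable (h : M.IsCyclicFlatSublattice 𝒵)
include h

lemma cyclicFlatsRk_union_add_inter_le (hS : S ⊆ M.E) (hT : T ⊆ M.E) :
    M.cyclicFlatsRk 𝒵 (S ∪ T) + M.cyclicFlatsRk 𝒵 (S ∩ T) ≤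
      M.cyclicFlatsRk 𝒵 S + M.cyclicFlatsRk 𝒵 T := by
  obtain ⟨F, hF, hFS⟩ := exists_cyclicFlatsRk_eq (M := M) h.nonempty S
  obtain ⟨G, hG, hGT⟩ := exists_cyclicFlatsRk_eq (M := M) h.nonempty T
  have hFE := h.subset_ground hF
  have hFG : F ∪ G ⊆ M.E := union_subset hFE (h.subset_ground hG)
  have hJ := cyclicFlatsRk_le (M := M) (S := S ∪ T) (h.closure_union_mem F hF G hG)
  have hK := cyclicFlatsRk_le (M := M) (S := S ∩ T) (h.cyclicPart_inter_mem F hF G hG)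
  have hrk : M.rk (M.closure (F ∪ G)) + M.rk (M.cyclicPart (F ∩ G))
      + ((F ∩ G) \ M.cyclicPart (F ∩ G)).ncard ≤ M.rk F + M.rk G := by
    have := rk_cyclicPart_add_ncard_le (M := M) (A := F ∩ G) (inter_subset_left.trans hFE)
    have := M.rk_union_add_rk_inter_le F G
    rw [rk_closure]
    omega
  have hSfin := M.ground_finite.subset hS
  have hTfin := M.ground_finite.subset hT
  have hJcount : ((S ∪ T) \ M.closure (F ∪ G)).ncard ≤ ((S ∪ T) \ (F ∪ G)).ncard :=
    ncard_le_ncard (sdiff_subset_sdiff_right (M.subset_closure _ hFG)) (hSfin.union hTfin).sdiff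
  have hKcount : ((S ∩ T) \ M.cyclicPart (F ∩ G)).ncard ≤
      ((S ∩ T) \ (F ∩ G)).ncard + ((F ∩ G) \ M.cyclicPart (F ∩ G)).ncard := by
    refine (ncard_le_ncard (fun x hx => ?_) ((hSfin.inter_of_left T).sdiff.union
      (M.ground_finite.subset (inter_subset_left.trans hFE)).sdiff)).trans (ncard_union_le _ _)
    by_cases hxFG : x ∈ F ∩ G
    · exact Or.inr ⟨hxFG, hx.2⟩
    · exact Or.inl ⟨hx.1, hxFG⟩
  have := ncard_union_sdiff_add_ncard_inter_sdiff_le (F := F) (G := G) hSfin hTfin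
  omega

lemma isRankFunction : IsRankFunction M.E (M.cyclicFlatsRk 𝒵) where
  empty := by
    have := cyclicFlatsRk_le (M := M) (S := ∅) h.closure_empty_mem
    rwa [rk_closure, M.empty_indep.rk_eq_ncard, ncard_empty, empty_sdiff, ncard_empty,
      Nat.le_zero] at this
  insert_le S hS e _ := by
    obtain ⟨G, hG, hGS⟩ := exists_cyclicFlatsRk_eq (M := M) h.nonempty S
    have hfin := (M.ground_finite.subset hS).sdiff (t := G)
    have := (ncard_le_ncard insert_sdiff_subset (hfin.insert e)).trans (ncard_insert_le e _)
    have := cyclicFlatsRk_le (M := M) (S := insert e S) hG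
    omega
  mono S T hST hT := by
    obtain ⟨G, hG, hGT⟩ := exists_cyclicFlatsRk_eq (M := M) h.nonempty T
    have := ncard_le_ncard (sdiff_subset_sdiff_left hST (t := G))
      (M.ground_finite.subset hT).sdiff
    have := cyclicFlatsRk_le (M := M) (S := S) hG
    omega
  union_add_inter_le _ hS _ hT := h.cyclicFlatsRk_union_add_inter_le hS hT

lemma mem_of_forall_cyclicFlatsRk (hYE : Y ⊆ M.E)
    (hflat : ∀ e ∈ M.E \ Y, M.cyclicFlatsRk 𝒵 Y < M.cyclicFlatsRk 𝒵 (insert e Y))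
    (hcyc : ∀ e ∈ Y, M.cyclicFlatsRk 𝒵 (Y \ {e}) = M.cyclicFlatsRk 𝒵 Y) : Y ∈ 𝒵 := by
  -- a minimiser `G` for `Y` is `Y` itself: cyclicity of `Y` gives `Y ⊆ G`, flatness `G ⊆ Y`
  obtain ⟨G, hG, hGY⟩ := exists_cyclicFlatsRk_eq (M := M) h.nonempty Y
  have hYG : Y ⊆ G := fun e heY => by_contra fun heG => by
    have hcard := ncard_sdiff_singleton_add_one (s := Y \ G) ⟨heY, heG⟩
      (M.ground_finite.subset hYE).sdiff
    rw [sdiff_sdiff_comm] at hcard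
    have := cyclicFlatsRk_le (M := M) (S := Y \ {e}) hG
    have := hcyc e heY
    omega
  have hGY : G ⊆ Y := fun e heG => by_contra fun heY => by
    have := cyclicFlatsRk_le (M := M) (S := insert e Y) hG
    rw [insert_sdiff_of_mem _ heG] at this
    have := hflat e ⟨h.subset_ground hG heG, heY⟩
    omega
  rwa [hYG.antisymm hGY]

lemma cyclicFlatsRk_lt_insert (hG : G ∈ 𝒵) (he : e ∈ M.E \ G) :
    M.cyclicFlatsRk 𝒵 G < M.cyclicFlatsRk 𝒵 (insert e G) := by
  rw [cyclicFlatsRk_eq_rk hG (h.subset_ground hG)]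
  exact ((cyclicFlat_iff_rk.1 (h.cyclicFlat G hG)).2.1 e he).trans_le
    (rk_le_cyclicFlatsRk h.nonempty (insert_subset he.1 (h.subset_ground hG)))

lemma cyclicFlatsRk_sdiff_singleton (hG : G ∈ 𝒵) (he : e ∈ G) :
    M.cyclicFlatsRk 𝒵 (G \ {e}) = M.cyclicFlatsRk 𝒵 G := by
  refine le_antisymm (h.isRankFunction.mono sdiff_subset (h.subset_ground hG)) ?_
  rw [cyclicFlatsRk_eq_rk hG (h.subset_ground hG),
    ← (cyclicFlat_iff_rk.1 (h.cyclicFlat G hG)).2.2 e he]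
  exact rk_le_cyclicFlatsRk h.nonempty (sdiff_subset.trans (h.subset_ground hG))

theorem exists_matroid :
    ∃ N : Matroid α, N.E = M.E ∧ {Y | N.CyclicFlat Y} = 𝒵 ∧ ∀ Y ∈ 𝒵, N.rk Y = M.rk Y := by
  obtain ⟨N, hE, hrk⟩ := h.isRankFunction.exists_matroid M.ground_finite
  have : N.Finite := ⟨hE ▸ M.ground_finite⟩
  refine ⟨N, hE, ext fun Y => ⟨fun hY => ?_, fun hY => ?_⟩, fun Y hY => ?_⟩
  · obtain ⟨hYE, hflat, hcyc⟩ := cyclicFlat_iff_rk.1 hY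
    rw [hE] at hYE hflat
    refine h.mem_of_forall_cyclicFlatsRk hYE (fun e he => ?_) (fun e he => ?_)
    · rw [← hrk _ hYE, ← hrk _ (insert_subset he.1 hYE)]
      exact hflat e he
    · rw [← hrk _ hYE, ← hrk _ (sdiff_subset.trans hYE)]
      exact hcyc e he
  · have hYE := h.subset_ground hY
    refine cyclicFlat_iff_rk.2 ⟨hE ▸ hYE, fun e he => ?_, fun e he => ?_⟩
    · rw [hE] at he
      rw [hrk _ hYE, hrk _ (insert_subset he.1 hYE)]
      exact h.cyclicFlatsRk_lt_insert hY he
    · rw [hrk _ hYE, hrk _ (sdiff_subset.trans hYE)]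
      exact h.cyclicFlatsRk_sdiff_singleton hY he
  · rw [hrk _ (h.subset_ground hY), cyclicFlatsRk_eq_rk hY (h.subset_ground hY)]

end IsCyclicFlatSublattice

end Sublattice

section RemoveCyclicFlat

variable {M : Matroid α} {X F : Set α} (hX : M.CyclicFlat X)
  (hinc : ∀ Y : Set α, M.CyclicFlat Y → Y ≠ X → Y ≠ M.closure ∅ → Y ≠ M.cyclicPart M.E →
    ¬ Y ⊆ X ∧ ¬ X ⊆ Y)
include hX hinc

lemma eq_closure_empty_of_subset_of_incomparable (hF : M.CyclicFlat F) (hFX : F ≠ X)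
    (hFsub : F ⊆ X) : F = M.closure ∅ := by
  by_contra h0
  by_cases h1 : F = M.cyclicPart M.E
  · exact hFX (hFsub.antisymm (h1 ▸ hX.subset_cyclicPart_ground))
  · exact (hinc F hF hFX h0 h1).1 hFsub

lemma eq_cyclicPart_ground_of_superset_of_incomparable (hF : M.CyclicFlat F) (hFX : F ≠ X)
    (hsub : X ⊆ F) : F = M.cyclicPart M.E := by
  by_contra h1
  by_cases h0 : F = M.closure ∅
  · exact hFX (subset_antisymm (by rw [h0]; exact hX.1.loops_subset) hsub)
  · exact (hinc F hF hFX h0 h1).2 hsub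

lemma isCyclicFlatSublattice_sdiff_singleton (hX0 : X ≠ M.closure ∅)
    (hX1 : X ≠ M.cyclicPart M.E) : M.IsCyclicFlatSublattice ({Y | M.CyclicFlat Y} \ {X}) where
  cyclicFlat _ hF := hF.1
  closure_empty_mem := ⟨M.cyclicFlat_closure_empty, hX0.symm⟩
  closure_union_mem F hF G hG := by
    refine ⟨hF.1.closure_union hG.1, fun hJ => hX0 ?_⟩
    have hFG : F ∪ G ⊆ X := hJ ▸ M.subset_closure _
      (union_subset hF.1.1.subset_ground hG.1.1.subset_ground)
    rw [← hJ, eq_closure_empty_of_subset_of_incomparable hX hinc hF.1 hF.2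
      (subset_union_left.trans hFG), eq_closure_empty_of_subset_of_incomparable hX hinc hG.1
      hG.2 (subset_union_right.trans hFG), union_self, closure_closure]
  cyclicPart_inter_mem F hF G hG := by
    refine ⟨(hF.1.1.inter hG.1.1).cyclicFlat_cyclicPart, fun hK => hX1 ?_⟩
    have hXFG : X ⊆ F ∩ G := hK ▸ M.cyclicPart_subset _
    rw [← hK, eq_cyclicPart_ground_of_superset_of_incomparable hX hinc hF.1 hF.2
      (hXFG.trans inter_subset_left), eq_cyclicPart_ground_of_superset_of_incomparable hX hinc
      hG.1 hG.2 (hXFG.trans inter_subset_right), inter_self, cyclicPart_cyclicPart]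

end RemoveCyclicFlat

end Matroid

open Matroid

/-- If `X` is a cyclic flat of a finite matroid `M` that is neither the least cyclic flat
(`cl ∅`) nor the greatest cyclic flat (the union of all circuits), and every other cyclic flat
besides these is incomparable with `X`, then there is a matroid `M'` on `E(M)` whose cyclic
flats are exactly those of `M` with `X` removed, with the same ranks. -/
theorem exists_matroid_remove_cyclicFlat {α : Type*} (M : Matroid α) [M.Finite]
    (X : Set α) (hX : M.CyclicFlat X)
    (hX0 : X ≠ M.closure ∅) (hX1 : X ≠ ⋃₀ {C : Set α | M.IsCircuit' C})
    (hinc : ∀ Y : Set α, M.CyclicFlat Y → Y ≠ X → Y ≠ M.closure ∅ →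
      Y ≠ ⋃₀ {C : Set α | M.IsCircuit' C} → ¬ Y ⊆ X ∧ ¬ X ⊆ Y) :
    ∃ M' : Matroid α, M'.E = M.E ∧
      {Y : Set α | M'.CyclicFlat Y} = {Y : Set α | M.CyclicFlat Y} \ {X} ∧
      ∀ Y : Set α, M.CyclicFlat Y → Y ≠ X → M'.rk Y = M.rk Y := by
  rw [sUnion_isCircuit'_eq] at hX1 hinc
  obtain ⟨M', hE, hZ, hrk⟩ :=
    (isCyclicFlatSublattice_sdiff_singleton hX hinc hX0 hX1).exists_matroid
  exact ⟨M', hE, hZ, fun Y hY hYX => hrk Y ⟨hY, hYX⟩⟩
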